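/- Under the same hypotheses as follows—Δ ⊆ ℝ^n nonempty closed convex; Ψ : ℝ^n → ℝ differentiable and σ_Ψ-strongly convex on Δ (D_Ψ(x,y) ≥ (σ_Ψ/2)‖x−y‖² with D_Ψ(x,y) = Ψ(x) − Ψ(y) − ⟨∇Ψ(y), x−y⟩); constants A > 0, B ≥ 0, φ* ≥ 0; μ* ∈ Δ; sequences (μ^t) ⊆ Δ, (ℓ^t) ⊆ ℝ^n, (φ^t) with φ^t ≥ 0 satisfying ‖ℓ^t‖² ≤ A φ^t + B, ⟨μ* − μ^t, ℓ^t⟩ ≤ φ* − φ^t, and the mirror-step optimality ⟨η_t ℓ^t + ∇Ψ(μ^{t+1}) − ∇Ψ(μ^t), μ^{t+1} − ν⟩ ≤ 0 for all ν ∈ Δ; non-increasing step sizes 0 < η_{t+1} ≤ η_t ≤ σ_Ψ/(2A); a† ≥ D_Ψ(μ*, μ^1); C₁ = φ* + B/A—one has for every t ≥ 1 the unweighted potential bound: Σ_{k=1}^t φ^k ≤ 2 ( C₁ t + (C₁ Σ_{k=1}^t η_k + a†) / η_t + a† / η_1 ). -/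

import Mathlib

/-!
Write `a k = D(μ*, μ k)`. The three-point identity for Bregman divergences turns the optimality
of the mirror step into `η_k ⟪ℓ k, μ (k+1) - μ*⟫ ≤ a k - a (k+1) - D(μ (k+1), μ k)`, and strong
convexity with Young's inequality absorbs the remaining term `η_k ⟪ℓ k, μ k - μ (k+1)⟫` at the
price `η_k² ‖ℓ k‖² / (2σ)`. Convexity, the growth bound and `η_k ≤ σ / (2A)` then give
`(3/4) η_k φ k ≤ η_k C₁ + a k - a (k+1)`. In particular `a` grows by at most `η_k C₁` per step, so
`a k ≤ a† + C₁ ∑ η_j`; dividing by `η_k` and summing by parts, where `1/η_k` is nondecreasing,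
yields the bound.
-/

open scoped RealInnerProductSpace
open Finset

section MirrorDescent

variable {E : Type*} [NormedAddCommGroup E] [InnerProductSpace ℝ E]

def bregmanDiv (Ψ : E → ℝ) (g : E → E) (x y : E) : ℝ :=
  Ψ x - Ψ y - ⟪g y, x - y⟫

theorem bregmanDiv_three_point (Ψ : E → ℝ) (g : E → E) (u x y : E) :
    bregmanDiv Ψ g u x - bregmanDiv Ψ g u y - bregmanDiv Ψ g y x = ⟪g x - g y, y - u⟫ := by
  simp only [bregmanDiv, inner_sub_left, inner_sub_right]
  ring

theorem mirror_step_inner_le {Ψ : E → ℝ} {g : E → E} {σ η : ℝ} (hσ : 0 < σ) {u x y ℓ : E}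
    (hopt : ⟪η • ℓ + g y - g x, y - u⟫ ≤ 0)
    (hstrong : σ / 2 * ‖y - x‖ ^ 2 ≤ bregmanDiv Ψ g y x) :
    η * ⟪ℓ, x - u⟫ ≤
      bregmanDiv Ψ g u x - bregmanDiv Ψ g u y + η ^ 2 * ‖ℓ‖ ^ 2 / (2 * σ) := by
  have hprox : η * ⟪ℓ, y - u⟫ ≤
      bregmanDiv Ψ g u x - bregmanDiv Ψ g u y - bregmanDiv Ψ g y x := by
    rw [bregmanDiv_three_point]
    rw [add_sub_assoc, inner_add_left, real_inner_smul_left, ← neg_sub (g x), inner_neg_left]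
      at hopt
    linarith
  have hyoung : η * ⟪ℓ, x - y⟫ ≤ η ^ 2 * ‖ℓ‖ ^ 2 / (2 * σ) + σ / 2 * ‖y - x‖ ^ 2 := by
    have hcs : η * ⟪ℓ, x - y⟫ ≤ ‖η • ℓ‖ * ‖y - x‖ := by
      rw [← real_inner_smul_left, norm_sub_rev]
      exact real_inner_le_norm _ _
    have hsq : η ^ 2 * ‖ℓ‖ ^ 2 = ‖η • ℓ‖ ^ 2 := by
      rw [norm_smul, mul_pow, Real.norm_eq_abs, sq_abs]
    -- Young's inequality `ab ≤ a² / (2σ) + σ b² / 2`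
    have := sq_nonneg (‖η • ℓ‖ - σ * ‖y - x‖)
    rw [hsq, div_add' _ _ _ (by positivity), le_div_iff₀ (by positivity)]
    nlinarith
  have hsplit : ⟪ℓ, x - u⟫ = ⟪ℓ, y - u⟫ + ⟪ℓ, x - y⟫ := by
    rw [← inner_add_right, sub_add_sub_cancel']
  rw [hsplit, mul_add]
  linarith

theorem mirror_step_potential_le {Ψ : E → ℝ} {g : E → E} {σ η A B φ φstar : ℝ}
    {u x y ℓ : E} (hσ : 0 < σ) (hA : 0 < A) (hB : 0 ≤ B) (hη : 0 < η)
    (hησ : η ≤ σ / (2 * A)) (hφ : 0 ≤ φ)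
    (hopt : ⟪η • ℓ + g y - g x, y - u⟫ ≤ 0)
    (hstrong : σ / 2 * ‖y - x‖ ^ 2 ≤ bregmanDiv Ψ g y x)
    (hconv : ⟪u - x, ℓ⟫ ≤ φstar - φ) (hgrowth : ‖ℓ‖ ^ 2 ≤ A * φ + B) :
    3 / 4 * (η * φ) ≤ η * (φstar + B / A) + (bregmanDiv Ψ g u x - bregmanDiv Ψ g u y) := by
  have hregret := mirror_step_inner_le hσ hopt hstrong
  have hlin : η * (φ - φstar) ≤ η * ⟪ℓ, x - u⟫ := by
    have : ⟪ℓ, x - u⟫ = -⟪u - x, ℓ⟫ := by rw [real_inner_comm, ← inner_neg_left, neg_sub]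
    rw [this]
    exact mul_le_mul_of_nonneg_left (by linarith) hη.le
  have hAη : 2 * A * η ≤ σ := by rwa [le_div_iff₀ (by positivity), mul_comm] at hησ
  have hquad : η ^ 2 * ‖ℓ‖ ^ 2 / (2 * σ) ≤ η * φ / 4 + η * (B / A) / 4 := by
    have hrhs : η * φ / 4 + η * (B / A) / 4 = η * (A * φ + B) / (4 * A) := by
      field_simp
    rw [hrhs, div_le_div_iff₀ (by positivity) (by positivity)]
    have := mul_le_mul_of_nonneg_left hgrowth (by positivity : 0 ≤ 4 * A * η ^ 2)
    have := mul_le_mul_of_nonneg_right hAη (by positivity : 0 ≤ 2 * η * (A * φ + B))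
    linarith
  have : 0 ≤ η * (B / A) := by positivity
  linarith

end MirrorDescent

theorem le_add_sum_Ico_of_succ_le {a b : ℕ → ℝ} {m k : ℕ} (hmk : m ≤ k)
    (h : ∀ j ∈ Ico m k, a (j + 1) ≤ a j + b j) :
    a k ≤ a m + ∑ j ∈ Ico m k, b j := by
  have := sum_le_sum fun j hj => sub_le_iff_le_add'.mpr (h j hj)
  rw [sum_Ico_sub a hmk] at this
  linarith

/-- Summation by parts: the nonnegative increments of `w` are weighted by `a ≤ M`. -/
theorem sum_mul_sub_succ_add_le {w a : ℕ → ℝ} {M : ℝ} {m t : ℕ} (hmt : m ≤ t)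
    (hw₀ : 0 ≤ w m) (hw : ∀ k ∈ Ico m t, w k ≤ w (k + 1)) (ha : ∀ k ∈ Icc m t, a k ≤ M) :
    ∑ k ∈ Icc m t, w k * (a k - a (k + 1)) + w t * a (t + 1) ≤ w t * M := by
  induction t, hmt using Nat.le_induction with
  | base =>
    rw [Icc_self, sum_singleton, mul_sub, sub_add_cancel]
    exact mul_le_mul_of_nonneg_left (ha m (left_mem_Icc.2 le_rfl)) hw₀
  | succ t hmt ih =>
    have hrest := ih (fun k hk => hw k (Ico_subset_Ico_right t.le_succ hk))
      (fun k hk => ha k (Icc_subset_Icc_right t.le_succ hk))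
    have hgap := mul_le_mul_of_nonneg_left (ha (t + 1) (right_mem_Icc.2 (by omega)))
      (sub_nonneg.2 (hw t (mem_Ico.2 ⟨hmt, t.lt_succ_self⟩)))
    rw [sum_Icc_succ_top (by omega)]
    linarith

theorem sum_le_of_weighted_telescoping_bound {φ η a : ℕ → ℝ} {C : ℝ} (hC : 0 ≤ C)
    (hη : ∀ k ≥ 1, 0 < η k) (hηanti : ∀ k ≥ 1, η (k + 1) ≤ η k)
    (hφ : ∀ k ≥ 1, 0 ≤ φ k) (ha : ∀ k ≥ 1, 0 ≤ a k)
    (hstep : ∀ k ≥ 1, η k * φ k ≤ 2 * (η k * C + (a k - a (k + 1)))) {t : ℕ} (ht : 1 ≤ t) :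
    ∑ k ∈ Icc 1 t, φ k ≤ 2 * (C * t + (C * ∑ k ∈ Icc 1 t, η k + a 1) / η t) := by
  set M := C * ∑ k ∈ Icc 1 t, η k + a 1
  have hdrift : ∀ k ≥ 1, a (k + 1) ≤ a k + η k * C := fun k hk => by
    linarith [hstep k hk, mul_nonneg (hη k hk).le (hφ k hk)]
  have hbound : ∀ k ∈ Icc 1 t, a k ≤ M := by
    intro k hk
    obtain ⟨hk1, hkt⟩ := mem_Icc.mp hk
    have hsub : ∑ j ∈ Ico 1 k, η j ≤ ∑ j ∈ Icc 1 t, η j :=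
      sum_le_sum_of_subset_of_nonneg (Ico_subset_Icc_self.trans (Icc_subset_Icc_right hkt))
        fun j hj _ => (hη j (mem_Icc.mp hj).1).le
    have := le_add_sum_Ico_of_succ_le hk1 fun j hj => hdrift j (mem_Ico.mp hj).1
    rw [← sum_mul] at this
    linarith [mul_le_mul_of_nonneg_left hsub hC]
  have hφle : ∀ k ∈ Icc 1 t, φ k ≤ 2 * C + 2 * ((η k)⁻¹ * (a k - a (k + 1))) := by
    intro k hk
    have hk1 := (mem_Icc.mp hk).1
    have hηk := hη k hk1
    calc φ k = (η k)⁻¹ * (η k * φ k) := by field_simp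
      _ ≤ (η k)⁻¹ * (2 * (η k * C + (a k - a (k + 1)))) :=
        mul_le_mul_of_nonneg_left (hstep k hk1) (inv_nonneg.2 hηk.le)
      _ = 2 * C + 2 * ((η k)⁻¹ * (a k - a (k + 1))) := by field_simp
  have habel := sum_mul_sub_succ_add_le (w := fun k => (η k)⁻¹) ht
    (inv_nonneg.2 (hη 1 le_rfl).le)
    (fun k hk => inv_anti₀ (hη _ (by omega)) (hηanti k (mem_Ico.mp hk).1)) hbound
  have hlast : 0 ≤ (η t)⁻¹ * a (t + 1) := mul_nonneg (inv_nonneg.2 (hη t ht).le) (ha _ (by omega))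
  calc ∑ k ∈ Icc 1 t, φ k
      ≤ ∑ k ∈ Icc 1 t, (2 * C + 2 * ((η k)⁻¹ * (a k - a (k + 1)))) := sum_le_sum hφle
    _ = 2 * (C * t + ∑ k ∈ Icc 1 t, (η k)⁻¹ * (a k - a (k + 1))) := by
      rw [sum_add_distrib, sum_const, Nat.card_Icc, Nat.add_sub_cancel, nsmul_eq_mul, ← mul_sum]
      ring
    _ ≤ 2 * (C * t + M / η t) := by
      rw [div_eq_inv_mul]
      linarith

theorem md_post_attack_unweighted_potential_bound_general
    {n : ℕ}
    (Δ : Set (EuclideanSpace ℝ (Fin n)))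
    (Ψ : EuclideanSpace ℝ (Fin n) → ℝ)
    (gΨ : EuclideanSpace ℝ (Fin n) → EuclideanSpace ℝ (Fin n))
    (D : EuclideanSpace ℝ (Fin n) → EuclideanSpace ℝ (Fin n) → ℝ)
    (hD : ∀ x y, D x y = Ψ x - Ψ y - ⟪gΨ y, x - y⟫)
    (σΨ : ℝ) (hσΨ : 0 < σΨ)
    (hstrong : ∀ x ∈ Δ, ∀ y ∈ Δ, σΨ / 2 * ‖x - y‖ ^ 2 ≤ D x y)
    (A B φstar : ℝ) (hA : 0 < A) (hB : 0 ≤ B) (hφstar : 0 ≤ φstar)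
    (μstar : EuclideanSpace ℝ (Fin n)) (hμstar : μstar ∈ Δ)
    (μ : ℕ → EuclideanSpace ℝ (Fin n)) (ℓ : ℕ → EuclideanSpace ℝ (Fin n))
    (φ : ℕ → ℝ) (η : ℕ → ℝ)
    (hμΔ : ∀ t ≥ 1, μ t ∈ Δ)
    (hφpos : ∀ t ≥ 1, 0 ≤ φ t)
    (hgrowth : ∀ t ≥ 1, ‖ℓ t‖ ^ 2 ≤ A * φ t + B)
    (hconvx : ∀ t ≥ 1, ⟪μstar - μ t, ℓ t⟫ ≤ φstar - φ t)
    (hopt : ∀ t ≥ 1, ∀ ν ∈ Δ,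
      ⟪η t • ℓ t + gΨ (μ (t + 1)) - gΨ (μ t), μ (t + 1) - ν⟫ ≤ 0)
    (hηpos : ∀ t ≥ 1, 0 < η t)
    (hηdec : ∀ t ≥ 1, η (t + 1) ≤ η t)
    (hηle : ∀ t ≥ 1, η t ≤ σΨ / (2 * A))
    (adag : ℝ) (hadag : D μstar (μ 1) ≤ adag)
    (C₁ : ℝ) (hC₁ : C₁ = φstar + B / A) :
    ∀ t ≥ 1,
      ∑ k ∈ Finset.Icc 1 t, φ k ≤
        2 * (C₁ * t + (C₁ * ∑ k ∈ Finset.Icc 1 t, η k + adag) / η t + adag / η 1) := by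
  intro t ht
  obtain rfl : D = bregmanDiv Ψ gΨ := funext₂ hD
  have hC₁0 : 0 ≤ C₁ := hC₁ ▸ by positivity
  have hdist : ∀ k ≥ 1, 0 ≤ bregmanDiv Ψ gΨ μstar (μ k) := fun k hk =>
    (hstrong _ hμstar _ (hμΔ k hk)).trans' (by positivity)
  have hstep : ∀ k ≥ 1, η k * φ k ≤
      2 * (η k * C₁ + (bregmanDiv Ψ gΨ μstar (μ k) - bregmanDiv Ψ gΨ μstar (μ (k + 1)))) := by
    intro k hk
    have := mirror_step_potential_le hσΨ hA hB (hηpos k hk) (hηle k hk) (hφpos k hk)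
      (hopt k hk μstar hμstar) (hstrong _ (hμΔ (k + 1) (by omega)) _ (hμΔ k hk))
      (hconvx k hk) (hgrowth k hk)
    rw [← hC₁] at this
    linarith [mul_nonneg (hηpos k hk).le (hφpos k hk)]
  have hsum := sum_le_of_weighted_telescoping_bound hC₁0 hηpos hηdec hφpos hdist hstep ht
  have hinit : (C₁ * ∑ k ∈ Icc 1 t, η k + bregmanDiv Ψ gΨ μstar (μ 1)) / η t ≤
      (C₁ * ∑ k ∈ Icc 1 t, η k + adag) / η t :=
    div_le_div_of_nonneg_right (by linarith) (hηpos t ht).le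
  have : 0 ≤ adag / η 1 := div_nonneg ((hdist 1 le_rfl).trans hadag) (hηpos 1 le_rfl).le
  linarith

/-- Third part of Lemma 2 of the paper: unweighted potential bound along the
post-attack mirror-descent trajectory,
`Σ_{k=1}^t φ^k ≤ 2 (C₁ t + (C₁ Σ_{k=1}^t η_k + a†)/η_t + a†/η_1)`. -/
theorem md_post_attack_unweighted_potential_bound
    {n : ℕ}
    (Δ : Set (EuclideanSpace ℝ (Fin n)))
    (hΔne : Δ.Nonempty) (hΔclosed : IsClosed Δ) (hΔconv : Convex ℝ Δ)
    (Ψ : EuclideanSpace ℝ (Fin n) → ℝ)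
    (gΨ : EuclideanSpace ℝ (Fin n) → EuclideanSpace ℝ (Fin n))
    (hΨ : ∀ x, HasGradientAt Ψ (gΨ x) x)
    (D : EuclideanSpace ℝ (Fin n) → EuclideanSpace ℝ (Fin n) → ℝ)
    (hD : ∀ x y, D x y = Ψ x - Ψ y - ⟪gΨ y, x - y⟫)
    (σΨ : ℝ) (hσΨ : 0 < σΨ)
    (hstrong : ∀ x ∈ Δ, ∀ y ∈ Δ, σΨ / 2 * ‖x - y‖ ^ 2 ≤ D x y)
    (A B φstar : ℝ) (hA : 0 < A) (hB : 0 ≤ B) (hφstar : 0 ≤ φstar)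
    (μstar : EuclideanSpace ℝ (Fin n)) (hμstar : μstar ∈ Δ)
    (μ : ℕ → EuclideanSpace ℝ (Fin n)) (ℓ : ℕ → EuclideanSpace ℝ (Fin n))
    (φ : ℕ → ℝ) (η : ℕ → ℝ)
    (hμΔ : ∀ t ≥ 1, μ t ∈ Δ)
    (hφpos : ∀ t ≥ 1, 0 ≤ φ t)
    (hgrowth : ∀ t ≥ 1, ‖ℓ t‖ ^ 2 ≤ A * φ t + B)
    (hconvx : ∀ t ≥ 1, ⟪μstar - μ t, ℓ t⟫ ≤ φstar - φ t)
    (hopt : ∀ t ≥ 1, ∀ ν ∈ Δ,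
      ⟪η t • ℓ t + gΨ (μ (t + 1)) - gΨ (μ t), μ (t + 1) - ν⟫ ≤ 0)
    (hηpos : ∀ t ≥ 1, 0 < η t)
    (hηdec : ∀ t ≥ 1, η (t + 1) ≤ η t)
    (hηle : ∀ t ≥ 1, η t ≤ σΨ / (2 * A))
    (adag : ℝ) (hadag : D μstar (μ 1) ≤ adag)
    (C₁ : ℝ) (hC₁ : C₁ = φstar + B / A) :
    ∀ t ≥ 1,
      ∑ k ∈ Finset.Icc 1 t, φ k ≤
        2 * (C₁ * t + (C₁ * ∑ k ∈ Finset.Icc 1 t, η k + adag) / η t + adag / η 1) :=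
  md_post_attack_unweighted_potential_bound_general Δ Ψ gΨ D hD σΨ hσΨ hstrong A B φstar hA hB
    hφstar μstar hμstar μ ℓ φ η hμΔ hφpos hgrowth hconvx hopt hηpos hηdec hηle adag hadag C₁ hC₁
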